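/- For any finite simple graph G, the polynomial F_G(x) = Σ_{F BCF} x^{|F|} does not depend on the choice of linear ordering of the edges of G used to define broken circuits. -/

import Mathlib

open Finset

attribute [local instance] Classical.propDecidable

variable {V : Type} [Fintype V] [DecidableEq V]

/-- `C` is the edge set of a cycle of `G`. -/
def IsCircuit (G : SimpleGraph V) (C : Finset (Sym2 V)) : Prop :=
  ∃ (v : V) (w : G.Walk v v), w.IsCycle ∧ C = w.edges.toFinset

/-- `B` is a broken circuit of `G` w.r.t. the edge ordering `ord`. -/
def IsBrokenCircuit (G : SimpleGraph V) (ord : Sym2 V → ℕ) (B : Finset (Sym2 V)) : Prop :=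
  ∃ C, IsCircuit G C ∧ ∃ e ∈ C, (∀ f ∈ C, ord f ≤ ord e) ∧ B = C.erase e

/-- `F` is a broken-circuit-free set of edges of `G`. -/
def IsBCF (G : SimpleGraph V) (ord : Sym2 V → ℕ) (F : Finset (Sym2 V)) : Prop :=
  F ⊆ G.edgeFinset ∧ ∀ B, IsBrokenCircuit G ord B → ¬ B ⊆ F

/-- The BCF generating function `F_G(x) = Σ_{F BCF} x^{|F|}`. -/
noncomputable def bcfSum (G : SimpleGraph V) (ord : Sym2 V → ℕ) (x : ℝ) : ℝ :=
  ∑ F ∈ G.edgeFinset.powerset.filter (IsBCF G ord), x ^ F.card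

/-! Whitney's broken circuit theorem gives the order-free expansion
`F_G(x) = ∑_{S ⊆ E(G)} (-1)^|S| (-x)^(|V| - c(S))`, where `c(S)` counts the components of the
spanning subgraph `(V, S)`; this is `(-x)^|V| χ_G(-1/x)`. The terms of the non-BCF sets cancel in
pairs `S ↔ S ∆ {e}`, where `e` is the least edge that tops a broken circuit inside `S`:
toggling `e` changes `|S|` by one but not `c(S)`, since the rest of the circuit already joins
the ends of `e`, and it does not change the least such edge. A BCF set is a forest, so
`|V| - c(S) = |S|` and its term is `x^|S|`. -/

namespace SimpleGraph

variable {W : Type*} {G H : SimpleGraph W} {u v x y : W}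

theorem reachable_sup_edge_iff :
    (G ⊔ edge u v).Reachable x y ↔
      G.Reachable x y ∨ (G.Reachable x u ∧ G.Reachable v y) ∨
        (G.Reachable x v ∧ G.Reachable u y) := by
  constructor
  · rintro ⟨p⟩
    induction p with
    | nil => exact .inl .rfl
    | @cons x z y hxz _ ih =>
      rcases (sup_adj _ _ _ _).mp hxz with hG | hE
      · have := hG.reachable
        grind [Reachable.trans]
      · rw [edge_adj] at hE
        grind [Reachable.trans, Reachable.symm, Reachable.refl]
  · have huv : (G ⊔ edge u v).Reachable u v := by
      by_cases h : u = v
      · exact h ▸ .rfl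
      · exact Adj.reachable ((sup_adj _ _ _ _).mpr (.inr (by simp [edge_adj, h])))
    have hle : G ≤ G ⊔ edge u v := le_sup_left
    rintro (h | ⟨hxu, hvy⟩ | ⟨hxv, huy⟩)
    · exact h.mono hle
    · exact (hxu.mono hle).trans (huv.trans (hvy.mono hle))
    · exact (hxv.mono hle).trans (huv.symm.trans (huy.mono hle))

theorem reachable_sup_edge_of_reachable (h : G.Reachable u v) :
    (G ⊔ edge u v).Reachable = G.Reachable := by
  ext x y
  rw [reachable_sup_edge_iff]
  grind [Reachable.trans, Reachable.symm]

theorem card_connectedComponent_congr (h : G.Reachable = H.Reachable) :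
    Nat.card G.ConnectedComponent = Nat.card H.ConnectedComponent := by
  unfold ConnectedComponent
  rw [h]

theorem card_connectedComponent_bot :
    Nat.card (⊥ : SimpleGraph W).ConnectedComponent = Nat.card W :=
  (Nat.card_eq_of_bijective _ ⟨fun _ _ h => reachable_bot.mp (ConnectedComponent.exact h),
    Quot.mk_surjective⟩).symm

theorem card_connectedComponent_sup_edge_add_one [Finite W] (h : ¬G.Reachable u v) :
    Nat.card (G ⊔ edge u v).ConnectedComponent + 1 = Nat.card G.ConnectedComponent := by
  set φ : G.ConnectedComponent → (G ⊔ edge u v).ConnectedComponent :=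
    ConnectedComponent.map (Hom.ofLE le_sup_left)
  set cv := G.connectedComponentMk v
  have hu : G.connectedComponentMk u ≠ cv := fun h' => h (ConnectedComponent.exact h')
  -- the new edge merges only the components of `u` and `v`
  have hbij : Function.Bijective fun c : {c // c ≠ cv} => φ c := by
    constructor
    · rintro ⟨c, hc⟩ ⟨d, hd⟩ hcd
      induction c using ConnectedComponent.ind with | _ x =>
      induction d using ConnectedComponent.ind with | _ y =>
      have hx : ¬G.Reachable x v := fun r => hc (ConnectedComponent.sound r)
      have hy : ¬G.Reachable y v := fun r => hd (ConnectedComponent.sound r)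
      have hxy := reachable_sup_edge_iff.mp (ConnectedComponent.exact hcd)
      simp only [Hom.coe_ofLE, id] at hxy
      exact Subtype.ext (ConnectedComponent.sound (by grind [Reachable.symm]))
    · intro c
      induction c using ConnectedComponent.ind with | _ x =>
      by_cases hx : G.Reachable x v
      · refine ⟨⟨_, hu⟩, ConnectedComponent.sound ?_⟩
        exact reachable_sup_edge_iff.mpr (.inr (.inl ⟨.rfl, hx.symm⟩))
      · exact ⟨⟨G.connectedComponentMk x, fun h' => hx (ConnectedComponent.exact h')⟩, rfl⟩
  have : Fintype G.ConnectedComponent := Fintype.ofFinite _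
  rw [← Nat.card_eq_of_bijective _ hbij, Nat.card_eq_fintype_card, Nat.card_eq_fintype_card,
    Fintype.card_subtype_compl, Fintype.card_subtype_eq]
  have := Fintype.card_pos_iff.mpr ⟨cv⟩
  omega

end SimpleGraph

open scoped symmDiff

theorem Finset.symmDiff_singleton_of_mem {α : Type*} [DecidableEq α] {s : Finset α} {a : α}
    (h : a ∈ s) : s ∆ {a} = s.erase a := by
  ext b; by_cases hb : b = a <;> simp [mem_symmDiff, hb, h]

theorem Finset.symmDiff_singleton_of_notMem {α : Type*} [DecidableEq α] {s : Finset α} {a : α}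
    (h : a ∉ s) : s ∆ {a} = insert a s := by
  ext b; by_cases hb : b = a <;> simp [mem_symmDiff, hb, h]

open SimpleGraph

section Components

variable {W : Type*}

noncomputable def numComponents (S : Finset (Sym2 W)) : ℕ :=
  Nat.card (fromEdgeSet (S : Set (Sym2 W))).ConnectedComponent

theorem fromEdgeSet_insert_eq_sup_edge [DecidableEq W] (S : Finset (Sym2 W)) (u v : W) :
    fromEdgeSet (↑(insert s(u, v) S) : Set (Sym2 W)) = fromEdgeSet ↑S ⊔ edge u v := by
  rw [edge, ← fromEdgeSet_union, Finset.coe_insert, Set.insert_eq, Set.union_comm]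

theorem numComponents_insert_of_reachable [DecidableEq W] {S : Finset (Sym2 W)} {u v : W}
    (h : (fromEdgeSet (S : Set (Sym2 W))).Reachable u v) :
    numComponents (insert s(u, v) S) = numComponents S := by
  rw [numComponents, fromEdgeSet_insert_eq_sup_edge]
  exact card_connectedComponent_congr (reachable_sup_edge_of_reachable h)

theorem numComponents_insert_add_one [Finite W] [DecidableEq W] {S : Finset (Sym2 W)} {u v : W}
    (h : ¬(fromEdgeSet (S : Set (Sym2 W))).Reachable u v) :
    numComponents (insert s(u, v) S) + 1 = numComponents S := by
  rw [numComponents, fromEdgeSet_insert_eq_sup_edge]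
  exact card_connectedComponent_sup_edge_add_one h

theorem numComponents_add_card_of_isAcyclic [Finite W] {S : Finset (Sym2 W)}
    (hS : ∀ e ∈ S, ¬e.IsDiag) (hac : (fromEdgeSet (S : Set (Sym2 W))).IsAcyclic) :
    numComponents S + #S = Nat.card W := by
  classical
  induction S using Finset.induction_on with
  | empty => simp [numComponents, card_connectedComponent_bot]
  | insert e S he ih =>
    induction e using Sym2.ind with | _ u v =>
    have huv : u ≠ v := fun h => hS _ (mem_insert_self _ _) (by simp [h])
    rw [fromEdgeSet_insert_eq_sup_edge, isAcyclic_sup_fromEdgeSet_iff] at hac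
    have hnr : ¬(fromEdgeSet (S : Set (Sym2 W))).Reachable u v := fun r =>
      (hac.2 r).elim huv fun hadj => he ((fromEdgeSet_adj _).mp hadj).1
    have := numComponents_insert_add_one hnr
    have := ih (fun f hf => hS f (mem_insert_of_mem hf)) hac.1
    rw [card_insert_of_notMem he]
    omega

noncomputable def whitneyTerm (x : ℝ) (S : Finset (Sym2 W)) : ℝ :=
  (-1) ^ #S * (-x) ^ (Nat.card W - numComponents S)

theorem whitneyTerm_of_isAcyclic [Finite W] {S : Finset (Sym2 W)} (hS : ∀ e ∈ S, ¬e.IsDiag)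
    (hac : (fromEdgeSet (S : Set (Sym2 W))).IsAcyclic) (x : ℝ) : whitneyTerm x S = x ^ #S := by
  have hrank : Nat.card W - numComponents S = #S := by
    have := numComponents_add_card_of_isAcyclic hS hac
    omega
  rw [whitneyTerm, hrank, ← mul_pow, neg_one_mul, neg_neg]

theorem whitneyTerm_symmDiff_singleton [DecidableEq W] {S : Finset (Sym2 W)} {e : Sym2 W}
    (h : numComponents (S ∆ {e}) = numComponents S) (x : ℝ) :
    whitneyTerm x (S ∆ {e}) = -whitneyTerm x S := by
  rw [whitneyTerm, whitneyTerm, h]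
  by_cases he : e ∈ S
  · rw [symmDiff_singleton_of_mem he, ← card_erase_add_one he, pow_succ]
    ring
  · rw [symmDiff_singleton_of_notMem he, card_insert_of_notMem he, pow_succ]
    ring

end Components

section BrokenCircuits

variable {W : Type} [DecidableEq W] {G : SimpleGraph W} {ord : Sym2 W → ℕ}
  {C S T : Finset (Sym2 W)} {e f : Sym2 W}

theorem IsCircuit.mem_edgeSet (hC : IsCircuit G C) (he : e ∈ C) : e ∈ G.edgeSet := by
  obtain ⟨v, w, -, rfl⟩ := hC
  exact w.edges_subset_edgeSet (List.mem_toFinset.mp he)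

theorem IsCircuit.exists_isBrokenCircuit_subset (hC : IsCircuit G C) (ord : Sym2 W → ℕ) :
    ∃ B ⊆ C, IsBrokenCircuit G ord B := by
  have hne : C.Nonempty := by
    obtain ⟨v, w, hw, rfl⟩ := hC
    obtain ⟨e, he⟩ := List.exists_mem_of_ne_nil _ (Walk.edges_eq_nil.not.mpr hw.not_nil)
    exact ⟨e, List.mem_toFinset.mpr he⟩
  obtain ⟨e, he, hmax⟩ := C.exists_max_image ord hne
  exact ⟨C.erase e, erase_subset _ _, C, hC, e, he, hmax, rfl⟩

theorem IsCircuit.reachable_erase (hC : IsCircuit G C) {u v : W} (he : s(u, v) ∈ C) :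
    (fromEdgeSet (↑(C.erase s(u, v)) : Set (Sym2 W))).Reachable u v := by
  obtain ⟨x, w, hw, rfl⟩ := hC
  have hsub : ∀ f ∈ w.edges, f ∈ (fromEdgeSet (↑w.edges.toFinset : Set (Sym2 W))).edgeSet :=
    fun f hf => by
      rw [edgeSet_fromEdgeSet]
      exact ⟨by simpa using hf, G.not_isDiag_of_mem_edgeSet (w.edges_subset_edgeSet hf)⟩
  have hcyc := adj_and_reachable_delete_edges_iff_exists_cycle.mpr
    ⟨x, w.transfer _ hsub, hw.transfer hsub, by simpa [Walk.edges_transfer] using he⟩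
  simpa [deleteEdges, Finset.coe_erase] using hcyc.2

/-- `C.erase e` is a broken circuit inside `S`; `e` itself may or may not lie in `S`. -/
def CompletesBrokenCircuit (G : SimpleGraph W) (ord : Sym2 W → ℕ) (S : Finset (Sym2 W))
    (e : Sym2 W) : Prop :=
  ∃ C, IsCircuit G C ∧ e ∈ C ∧ (∀ f ∈ C, ord f ≤ ord e) ∧ C.erase e ⊆ S

theorem CompletesBrokenCircuit.mem_edgeSet (h : CompletesBrokenCircuit G ord S e) :
    e ∈ G.edgeSet := by
  obtain ⟨C, hC, he, -⟩ := h
  exact hC.mem_edgeSet he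

theorem CompletesBrokenCircuit.mono (h : CompletesBrokenCircuit G ord S e) (hST : S ⊆ T) :
    CompletesBrokenCircuit G ord T e := by
  obtain ⟨C, hC, he, hmax, hCS⟩ := h
  exact ⟨C, hC, he, hmax, hCS.trans hST⟩

theorem CompletesBrokenCircuit.erase_self (h : CompletesBrokenCircuit G ord S e) :
    CompletesBrokenCircuit G ord (S.erase e) e := by
  obtain ⟨C, hC, he, hmax, hCS⟩ := h
  exact ⟨C, hC, he, hmax, fun f hf => mem_erase.mpr ⟨(mem_erase.mp hf).1, hCS hf⟩⟩

theorem CompletesBrokenCircuit.numComponents_insert (h : CompletesBrokenCircuit G ord S e) :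
    numComponents (insert e S) = numComponents S := by
  obtain ⟨C, hC, he, -, hCS⟩ := h
  induction e using Sym2.ind with | _ u v =>
  refine numComponents_insert_of_reachable ((hC.reachable_erase he).mono ?_)
  exact fromEdgeSet_mono (mod_cast hCS)

theorem CompletesBrokenCircuit.numComponents_symmDiff_singleton
    (h : CompletesBrokenCircuit G ord S e) : numComponents (S ∆ {e}) = numComponents S := by
  by_cases he : e ∈ S
  · rw [symmDiff_singleton_of_mem he]
    conv_rhs => rw [← insert_erase he]
    exact h.erase_self.numComponents_insert.symm
  · rw [symmDiff_singleton_of_notMem he]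
    exact h.numComponents_insert

def IsLeastCompleting (G : SimpleGraph W) (ord : Sym2 W → ℕ) (S : Finset (Sym2 W))
    (e : Sym2 W) : Prop :=
  CompletesBrokenCircuit G ord S e ∧ ∀ f, CompletesBrokenCircuit G ord S f → ord e ≤ ord f

theorem exists_isLeastCompleting (h : ∃ e, CompletesBrokenCircuit G ord S e) :
    ∃ e, IsLeastCompleting G ord S e := by
  obtain ⟨e, he, hmin⟩ := (InvImage.wf ord wellFounded_lt).has_min _ h
  exact ⟨e, he, fun f hf => not_lt.mp (hmin f hf)⟩

theorem IsLeastCompleting.unique (hord : Set.InjOn ord G.edgeSet)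
    (he : IsLeastCompleting G ord S e) (hf : IsLeastCompleting G ord S f) : e = f :=
  hord he.1.mem_edgeSet hf.1.mem_edgeSet (le_antisymm (he.2 f hf.1) (hf.2 e he.1))

/-- Toggling the least completing edge does not change which edge is least completing: removing
it keeps its own broken circuit, and any broken circuit that uses it has a larger top edge. -/
theorem IsLeastCompleting.symmDiff_singleton (h : IsLeastCompleting G ord S e) :
    IsLeastCompleting G ord (S ∆ {e}) e := by
  obtain ⟨hcomp, hleast⟩ := h
  by_cases he : e ∈ S
  · rw [symmDiff_singleton_of_mem he]
    exact ⟨hcomp.erase_self, fun f hf => hleast f (hf.mono (erase_subset _ _))⟩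
  · rw [symmDiff_singleton_of_notMem he]
    refine ⟨hcomp.mono (subset_insert _ _), fun f ⟨C, hC, hf, hmax, hCS⟩ => ?_⟩
    by_cases heC : e ∈ C
    · exact hmax e heC
    · refine hleast f ⟨C, hC, hf, hmax, fun g hg => ?_⟩
      refine (mem_insert.mp (hCS hg)).resolve_left ?_
      rintro rfl
      exact heC (mem_of_mem_erase hg)

end BrokenCircuits

section Whitney

variable {G : SimpleGraph V} {ord : Sym2 V → ℕ} {S : Finset (Sym2 V)}

theorem not_isBCF_iff (hS : S ⊆ G.edgeFinset) :
    ¬IsBCF G ord S ↔ ∃ e, CompletesBrokenCircuit G ord S e := by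
  constructor
  · intro h
    obtain ⟨B, ⟨C, hC, e, he, hmax, rfl⟩, hBS⟩ :
        ∃ B, IsBrokenCircuit G ord B ∧ B ⊆ S := by
      simpa [IsBCF, hS] using h
    exact ⟨e, C, hC, he, hmax, hBS⟩
  · rintro ⟨e, C, hC, he, hmax, hCS⟩ ⟨-, hbcf⟩
    exact hbcf _ ⟨C, hC, e, he, hmax, rfl⟩ hCS

theorem IsBCF.isAcyclic (h : IsBCF G ord S) : (fromEdgeSet (S : Set (Sym2 V))).IsAcyclic := by
  intro v c hc
  have hS : ∀ f ∈ c.edges, f ∈ S := fun f hf => by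
    simpa using (edgeSet_fromEdgeSet _ ▸ c.edges_subset_edgeSet hf).1
  have hG : ∀ f ∈ c.edges, f ∈ G.edgeSet := fun f hf => mem_edgeFinset.mp (h.1 (hS f hf))
  obtain ⟨B, hBC, hB⟩ :=
    IsCircuit.exists_isBrokenCircuit_subset ⟨v, c.transfer G hG, hc.transfer hG, rfl⟩ ord
  refine h.2 B hB (hBC.trans fun f hf => hS f ?_)
  simpa [Walk.edges_transfer] using hf

theorem IsBCF.whitneyTerm_eq (h : IsBCF G ord S) (x : ℝ) : whitneyTerm x S = x ^ #S :=
  whitneyTerm_of_isAcyclic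
    (fun _ he => G.not_isDiag_of_mem_edgeSet (mem_edgeFinset.mp (h.1 he))) h.isAcyclic x

theorem sum_whitneyTerm_not_isBCF (hord : Set.InjOn ord G.edgeSet) (x : ℝ) :
    ∑ S ∈ G.edgeFinset.powerset with ¬IsBCF G ord S, whitneyTerm x S = 0 := by
  have hleast : ∀ S ∈ G.edgeFinset.powerset.filter (¬IsBCF G ord ·),
      ∃ e, IsLeastCompleting G ord S e := by
    intro S hS
    rw [mem_filter, mem_powerset] at hS
    exact exists_isLeastCompleting ((not_isBCF_iff hS.1).mp hS.2)
  choose e he using hleast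
  have hmem : ∀ S hS, S ∆ {e S hS} ∈ G.edgeFinset.powerset.filter (¬IsBCF G ord ·) := by
    intro S hS
    have hsub : S ∆ {e S hS} ⊆ G.edgeFinset :=
      symmDiff_le_sup.trans (union_subset (mem_powerset.mp (mem_filter.mp hS).1)
        (singleton_subset_iff.mpr (mem_edgeFinset.mpr (he S hS).1.mem_edgeSet)))
    exact mem_filter.mpr ⟨mem_powerset.mpr hsub,
      (not_isBCF_iff hsub).mpr ⟨_, (he S hS).symmDiff_singleton.1⟩⟩
  refine sum_involution (fun S hS => S ∆ {e S hS}) (fun S hS => ?_) (fun S hS _ => ?_) hmem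
    (fun S hS => ?_)
  · rw [whitneyTerm_symmDiff_singleton (he S hS).1.numComponents_symmDiff_singleton,
      add_neg_cancel]
  · simp [symmDiff_eq_left]
  · rw [(he _ (hmem S hS)).unique hord (he S hS).symmDiff_singleton]
    exact symmDiff_symmDiff_cancel_right _ _

theorem bcfSum_eq_sum_whitneyTerm (hord : Set.InjOn ord G.edgeSet) (x : ℝ) :
    bcfSum G ord x = ∑ S ∈ G.edgeFinset.powerset, whitneyTerm x S := by
  rw [← sum_filter_add_sum_filter_not _ (IsBCF G ord), sum_whitneyTerm_not_isBCF hord, add_zero,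
    bcfSum]
  exact sum_congr rfl fun S hS => ((mem_filter.mp hS).2.whitneyTerm_eq x).symm

end Whitney

/-- The polynomial `F_G` does not depend on the linear ordering of the edges used to
define broken circuits. -/
theorem bcfSum_order_independent (G : SimpleGraph V) (ord₁ ord₂ : Sym2 V → ℕ)
    (h₁ : Set.InjOn ord₁ G.edgeSet) (h₂ : Set.InjOn ord₂ G.edgeSet) (x : ℝ) :
    bcfSum G ord₁ x = bcfSum G ord₂ x := by
  rw [bcfSum_eq_sum_whitneyTerm h₁, bcfSum_eq_sum_whitneyTerm h₂]
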